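/- Let E and F be finite-dimensional real inner product spaces, δ : E → F a linear map with adjoint δ*, and L := δ* ∘ δ. Then for every initial condition x₀ ∈ E, the solution t ↦ exp(−t L) x₀ of the Laplacian flow ẋ = −L x converges as t → ∞ to the orthogonal projection of x₀ onto ker(δ): lim_{t→∞} exp(−t L) x₀ = P_{ker δ}(x₀), where P_{ker δ} denotes orthogonal projection onto the subspace ker(δ) ⊆ E. -/

import Mathlib

/-!
Diagonalise the positive operator `L = δ* ∘ δ` in an orthonormal eigenbasis with eigenvalues
`μᵢ ≥ 0`: the flow multiplies the `i`-th coordinate by `exp (-t μᵢ)`. The component of `x₀` in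
`ker L = ker δ` is fixed by the flow, while the component in `(ker L)ᗮ` only involves eigenvectors
with `μᵢ > 0`, so it decays to `0`.
-/

open Filter Topology NormedSpace
open scoped RealInnerProductSpace

theorem NormedSpace.exp_apply_of_apply_eq_smul {𝕂 E : Type*} [RCLike 𝕂]
    [NormedAddCommGroup E] [NormedSpace 𝕂 E] [CompleteSpace E] {A : E →L[𝕂] E} {x : E} {μ : 𝕂}
    (h : A x = μ • x) : exp A x = exp μ • x := by
  have hpow (n : ℕ) : (A ^ n) x = μ ^ n • x := by
    induction n with
    | zero => simp
    | succ n ih => rw [pow_succ', mul_apply_eq_comp, ih, map_smul, h, smul_smul, pow_succ]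
  have hA := ((exp_series_hasSum_exp' (𝕂 := 𝕂) A).mapL (ContinuousLinearMap.apply 𝕂 E x))
  have hμ := (exp_series_hasSum_exp' (𝕂 := 𝕂) μ).smul_const x
  simp only [ContinuousLinearMap.apply_apply, smul_apply, hpow, smul_smul] at hA
  exact hA.unique (by simpa only [smul_eq_mul] using hμ)

namespace LinearMap

variable {E : Type*} [NormedAddCommGroup E] [InnerProductSpace ℝ E] [FiniteDimensional ℝ E]
  {T : E →ₗ[ℝ] E}

theorem IsSymmetric.exp_smul_apply_eq_sum (hT : T.IsSymmetric) (c : ℝ) (x : E) :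
    exp (c • T.toContinuousLinearMap) x =
      ∑ i, (Real.exp (c * hT.eigenvalues rfl i) * ⟪hT.eigenvectorBasis rfl i, x⟫) •
        hT.eigenvectorBasis rfl i := by
  set b := hT.eigenvectorBasis rfl
  conv_lhs => rw [← b.sum_repr' x]
  refine (map_sum _ _ _).trans (Finset.sum_congr rfl fun i _ => ?_)
  have hb : (c • T.toContinuousLinearMap) (b i) = (c * hT.eigenvalues rfl i) • b i := by
    simp [b, hT.apply_eigenvectorBasis, smul_smul]
  rw [map_smul, exp_apply_of_apply_eq_smul hb, ← Real.exp_eq_exp_ℝ, smul_smul, mul_comm]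

theorem IsPositive.tendsto_exp_neg_smul_apply_of_mem_orthogonal_ker (hT : T.IsPositive)
    {w : E} (hw : w ∈ (ker T)ᗮ) :
    Tendsto (fun t : ℝ => exp (-(t • T.toContinuousLinearMap)) w) atTop (𝓝 0) := by
  set b := hT.isSymmetric.eigenvectorBasis rfl
  set μ := hT.isSymmetric.eigenvalues rfl
  have hcoeff (i) : Tendsto (fun t : ℝ => Real.exp (-t * μ i) * ⟪b i, w⟫) atTop (𝓝 0) := by
    rcases (hT.nonneg_eigenvalues rfl i).eq_or_lt with hμ | hμ
    -- an eigenvector for the eigenvalue `0` lies in `ker T`, so `w` has no component along it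
    · have hb : b i ∈ ker T := by
        simp [b, mem_ker, hT.isSymmetric.apply_eigenvectorBasis, ← hμ]
      simp [Submodule.inner_right_of_mem_orthogonal hb hw]
    · simpa using (Real.tendsto_exp_atBot.comp
        (tendsto_neg_atTop_atBot.atBot_mul_const hμ)).mul_const ⟪b i, w⟫
  simp only [← neg_smul, hT.isSymmetric.exp_smul_apply_eq_sum]
  simpa using tendsto_finsetSum _ fun i _ => (hcoeff i).smul_const (b i)

theorem IsPositive.tendsto_exp_neg_smul_apply (hT : T.IsPositive) (x : E) :
    Tendsto (fun t : ℝ => exp (-(t • T.toContinuousLinearMap)) x) atTop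
      (𝓝 ((ker T).orthogonalProjectionOnto x : E)) := by
  rw [Submodule.coe_orthogonalProjectionOnto_apply]
  set p := (ker T).starProjection x
  have hp : T p = 0 := (ker T).starProjection_apply_mem x
  have hfix (t : ℝ) : exp (-(t • T.toContinuousLinearMap)) p = p := by
    simpa using exp_apply_of_apply_eq_smul (𝕂 := ℝ) (μ := 0) (by simp [hp])
  have hdecay :
      Tendsto (fun t : ℝ => exp (-(t • T.toContinuousLinearMap)) (x - p)) atTop (𝓝 0) :=
    hT.tendsto_exp_neg_smul_apply_of_mem_orthogonal_ker
      ((ker T).sub_starProjection_mem_orthogonal x)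
  simpa [map_sub, hfix] using (tendsto_const_nhds (x := p)).add hdecay

end LinearMap

/-- **Convergence of the Laplacian flow to the projection onto `ker δ`.**
For `L = δ* ∘ δ`, the solution `t ↦ exp (-t L) x₀` of `ẋ = -L x` converges, as
`t → ∞`, to the orthogonal projection of `x₀` onto `ker δ`. -/
theorem laplacian_flow_tendsto_orthogonalProjection {E F : Type*}
    [NormedAddCommGroup E] [InnerProductSpace ℝ E] [FiniteDimensional ℝ E]
    [NormedAddCommGroup F] [InnerProductSpace ℝ F] [FiniteDimensional ℝ F]
    (δ : E →ₗ[ℝ] F) (x₀ : E) :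
    Filter.Tendsto
      (fun t : ℝ =>
        NormedSpace.exp
          (-(t • (LinearMap.toContinuousLinearMap (LinearMap.adjoint δ ∘ₗ δ)))) x₀)
      Filter.atTop
      (nhds ((Submodule.orthogonalProjectionOnto (LinearMap.ker δ) x₀ : E))) := by
  rw [← LinearMap.ker_adjoint_comp_self δ]
  exact δ.isPositive_adjoint_comp_self.tendsto_exp_neg_smul_apply x₀
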